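/- Let (z^m)_{m ≥ 1} be a sequence of real numbers converging to z ∈ ℝ, and (u^m)_{m ≥ 1} a sequence in L²(n) converging to u in L²(n) such that |u^m(x)| ≤ M for n-a.e. x and all m (so that also |u(x)| ≤ M n-a.e.). Then f^m(z^m, u^m) → f(z, u) as m → ∞. -/

import Mathlib

open MeasureTheory

/-- `g α y = (exp(α y) − α y − 1)/α`. -/
noncomputable def g (α y : ℝ) : ℝ := (Real.exp (α * y) - α * y - 1) / α

/-- `u ∈ L²(n) ∩ L^∞(n)`: measurable, square integrable and essentially bounded. -/
def MemL2Linf (n : Measure ℝ) (u : ℝ → ℝ) : Prop :=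
  Measurable u ∧ Integrable (fun x => (u x) ^ 2) n ∧ ∃ K : ℝ, ∀ᵐ x ∂n, |u x| ≤ K

/-- The generator
`f(z,u) = inf_{π ∈ 𝒞} [ (α/2)(πσ − (z + θ/α))² + ∫ g_α(u(x) − πβ(x)) dn(x) ] − θz − θ²/(2α)`. -/
noncomputable def gen (α θ σ : ℝ) (β : ℝ → ℝ) (𝒞 : Set ℝ) (n : Measure ℝ)
    (z : ℝ) (u : ℝ → ℝ) : ℝ :=
  sInf ((fun π => α / 2 * (π * σ - (z + θ / α)) ^ 2
      + ∫ x, g α (u x - π * β x) ∂n) '' 𝒞) - θ * z - θ ^ 2 / (2 * α)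

/-- The truncated generator
`f^m(z,u) = inf_{π ∈ 𝒞} [ (α/2)(πσ − (z+θ/α))²·ρ_m(z)
  + ∫_{|x| ≥ 1/m} g_α(u(x) − πβ(x))·ρ_M(u(x)) dn(x) ] − θz − θ²/(2α)`. -/
noncomputable def genT (α θ σ : ℝ) (β : ℝ → ℝ) (𝒞 : Set ℝ) (n : Measure ℝ)
    (ρ : ℕ → ℝ → ℝ) (ρM : ℝ → ℝ) (m : ℕ) (z : ℝ) (u : ℝ → ℝ) : ℝ :=
  sInf ((fun π => α / 2 * (π * σ - (z + θ / α)) ^ 2 * ρ m z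
      + ∫ x in {x : ℝ | 1 / (m : ℝ) ≤ |x|}, g α (u x - π * β x) * ρM (u x) ∂n) '' 𝒞)
    - θ * z - θ ^ 2 / (2 * α)

/-!
Once `|zᵐ| ≤ m` and `|uᵐ| ≤ M`, both truncations `ρ_m` and `ρ_M` equal `1`, and an infimum over
the fixed set `𝒞` moves by at most the sup-distance of the objectives. That distance is bounded,
uniformly in `π ∈ 𝒞 ⊆ [-C, C]`, by three terms: the change of the quadratic part, which is
continuous in `z`; the change of the integral over `{|x| ≥ 1/m}`, where `|g_α(a) - g_α(b)|` is
at most a constant times `max(|a|, |b|) |a - b|`, so Cauchy–Schwarz bounds it by `‖uᵐ - u‖₂`;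
and the integral over `{|x| < 1/m}` dropped from `f`, dominated by a multiple of `(|u| + C|β|)²`
on sets decreasing to the null set `{0}`. The bound `|u| ≤ M` passes to the limit along an a.e.
convergent subsequence.
-/

open Filter Topology

lemma abs_exp_sub_one_le_abs_mul_exp_abs (x : ℝ) : |Real.exp x - 1| ≤ |x| * Real.exp |x| := by
  have h := (convex_Icc (-|x|) |x|).norm_image_sub_le_of_norm_hasDerivWithin_le
    (f := Real.exp) (fun y _ => (Real.hasDerivAt_exp y).hasDerivWithinAt)
    (fun y hy => by
      rw [Real.norm_eq_abs, abs_of_pos (Real.exp_pos y)]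
      exact Real.exp_le_exp.2 hy.2)
    ⟨neg_nonpos.2 (abs_nonneg x), abs_nonneg x⟩ (abs_le.1 le_rfl)
  simpa [Real.norm_eq_abs, mul_comm] using h

lemma abs_sub_sq_sub_sub_sq_le (p a b : ℝ) :
    |(p - a) ^ 2 - (p - b) ^ 2| ≤ (2 * |p| + |a| + |b|) * |a - b| := by
  rw [show (p - a) ^ 2 - (p - b) ^ 2 = (2 * p - a - b) * (b - a) by ring, abs_mul,
    abs_sub_comm b a]
  gcongr
  exact abs_le.2 ⟨by linarith [neg_abs_le p, le_abs_self a, le_abs_self b],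
    by linarith [le_abs_self p, neg_abs_le a, neg_abs_le b]⟩

lemma abs_sub_mul_le {π C : ℝ} (hπ : |π| ≤ C) (a b : ℝ) : |a - π * b| ≤ |a| + C * |b| :=
  (abs_sub _ _).trans (by rw [abs_mul]; gcongr)

lemma csInf_image_le_csInf_image_add {X : Type*} {F f : X → ℝ} {s : Set X} {δ : ℝ}
    (hs : s.Nonempty) (hF : BddBelow (F '' s)) (h : ∀ x ∈ s, F x ≤ f x + δ) :
    sInf (F '' s) ≤ sInf (f '' s) + δ := by
  have : sInf (F '' s) - δ ≤ sInf (f '' s) := le_csInf (hs.image f) <| by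
    rintro _ ⟨x, hx, rfl⟩
    linarith [csInf_le hF (Set.mem_image_of_mem F hx), h x hx]
  linarith

lemma abs_csInf_image_sub_csInf_image_le {X : Type*} {F f : X → ℝ} {s : Set X} {δ : ℝ}
    (hs : s.Nonempty) (hF : BddBelow (F '' s)) (hf : BddBelow (f '' s))
    (h : ∀ x ∈ s, |F x - f x| ≤ δ) : |sInf (F '' s) - sInf (f '' s)| ≤ δ := by
  have h₁ := csInf_image_le_csInf_image_add (f := f) (δ := δ) hs hF fun x hx => by
    linarith [abs_le.1 (h x hx)]
  have h₂ := csInf_image_le_csInf_image_add (f := F) (δ := δ) hs hf fun x hx => by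
    linarith [abs_le.1 (h x hx)]
  exact abs_sub_le_iff.2 ⟨by linarith, by linarith⟩

lemma tendsto_csInf_image_of_abs_sub_le {ι X : Type*} {l : Filter ι} {F : ι → X → ℝ}
    {f : X → ℝ} {s : Set X} {e : ι → ℝ} (hs : s.Nonempty) (hF : ∀ᶠ i in l, BddBelow (F i '' s))
    (hf : BddBelow (f '' s)) (he : Tendsto e l (𝓝 0))
    (hFf : ∀ᶠ i in l, ∀ x ∈ s, |F i x - f x| ≤ e i) :
    Tendsto (fun i => sInf (F i '' s)) l (𝓝 (sInf (f '' s))) := by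
  rw [tendsto_iff_norm_sub_tendsto_zero]
  refine squeeze_zero' (Eventually.of_forall fun _ => norm_nonneg _) ?_ he
  filter_upwards [hF, hFf] with i hi hie
  exact abs_csInf_image_sub_csInf_image_le hs hi hf hie

lemma eventually_abs_le_natCast {zs : ℕ → ℝ} {z : ℝ} (hz : Tendsto zs atTop (𝓝 z)) :
    ∀ᶠ m : ℕ in atTop, |zs m| ≤ m := by
  filter_upwards [hz.abs.eventually (ge_mem_nhds (lt_add_one |z|)),
    tendsto_natCast_atTop_atTop.eventually_ge_atTop (|z| + 1)] with m h₁ h₂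
  exact h₁.trans h₂

lemma g_nonneg {α : ℝ} (hα : 0 < α) (y : ℝ) : 0 ≤ g α y :=
  div_nonneg (by linarith [Real.add_one_le_exp (α * y)]) hα.le

lemma continuous_g (α : ℝ) : Continuous (g α) := by
  unfold g; fun_prop

lemma hasDerivAt_g {α : ℝ} (hα : α ≠ 0) (y : ℝ) : HasDerivAt (g α) (Real.exp (α * y) - 1) y := by
  have hlin : HasDerivAt (fun t => α * t) α y := by simpa using (hasDerivAt_id y).const_mul α
  exact (((hlin.exp.sub hlin).sub_const 1).div_const α).congr_deriv (by field_simp)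

lemma abs_g_sub_g_le {α R a b : ℝ} (hα : 0 < α) (ha : |a| ≤ R) (hb : |b| ≤ R) :
    |g α a - g α b| ≤ α * Real.exp (α * R) * max |a| |b| * |a - b| := by
  set r := max |a| |b|
  have hder : ∀ y ∈ Set.Icc (-r) r, ‖Real.exp (α * y) - 1‖ ≤ α * Real.exp (α * R) * r := by
    intro y hy
    have hyr : |y| ≤ r := abs_le.2 hy
    have hαy : |α * y| = α * |y| := by rw [abs_mul, abs_of_pos hα]
    calc ‖Real.exp (α * y) - 1‖ ≤ |α * y| * Real.exp |α * y| :=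
          abs_exp_sub_one_le_abs_mul_exp_abs _
      _ ≤ α * r * Real.exp (α * R) := by
          rw [hαy]
          gcongr
          exact hyr.trans (max_le ha hb)
      _ = α * Real.exp (α * R) * r := by ring
  have h := (convex_Icc (-r) r).norm_image_sub_le_of_norm_hasDerivWithin_le
    (fun y _ => (hasDerivAt_g hα.ne' y).hasDerivWithinAt) hder
    (abs_le.1 (le_max_right |a| |b|)) (abs_le.1 (le_max_left |a| |b|))
  simpa [Real.norm_eq_abs] using h

lemma g_le_mul_sq {α R a : ℝ} (hα : 0 < α) (ha : |a| ≤ R) :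
    g α a ≤ α * Real.exp (α * R) * a ^ 2 := by
  have h := abs_g_sub_g_le (b := 0) hα ha (by simpa using (abs_nonneg a).trans ha)
  have hg0 : g α 0 = 0 := by simp [g]
  rw [hg0, sub_zero, sub_zero, abs_zero, max_eq_left (abs_nonneg a), mul_assoc,
    abs_mul_abs_self, ← sq] at h
  exact (le_abs_self _).trans h

section Integrals

variable {X : Type*} [MeasurableSpace X] {μ : Measure X}

lemma integrable_g_comp {α R : ℝ} (hα : 0 < α) {f : X → ℝ} (hf : MemLp f 2 μ)
    (hfR : ∀ᵐ x ∂μ, |f x| ≤ R) : Integrable (fun x => g α (f x)) μ := by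
  refine (hf.integrable_sq.const_mul (α * Real.exp (α * R))).mono'
    ((continuous_g α).comp_aestronglyMeasurable hf.1) ?_
  filter_upwards [hfR] with x hx
  rw [Real.norm_eq_abs, abs_of_nonneg (g_nonneg hα _)]
  exact g_le_mul_sq hα hx

lemma abs_setIntegral_g_comp_sub_le {α R : ℝ} (hα : 0 < α) {f₁ f₂ w : X → ℝ} (s : Set X)
    (hf₁ : MemLp f₁ 2 μ) (hf₂ : MemLp f₂ 2 μ) (hw : MemLp w 2 μ)
    (hf₁R : ∀ᵐ x ∂μ, |f₁ x| ≤ R) (hf₂R : ∀ᵐ x ∂μ, |f₂ x| ≤ R) (hf₂w : ∀ᵐ x ∂μ, |f₂ x| ≤ w x) :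
    |∫ x in s, g α (f₁ x) ∂μ - ∫ x in s, g α (f₂ x) ∂μ| ≤
      α * Real.exp (α * R) * ∫ x, (w x + |f₁ x - f₂ x|) * |f₁ x - f₂ x| ∂μ := by
  have hg₁ := integrable_g_comp hα hf₁ hf₁R
  have hg₂ := integrable_g_comp hα hf₂ hf₂R
  have hd := (hf₁.sub hf₂).abs
  have hbound : Integrable (fun x => (w x + |f₁ x - f₂ x|) * |f₁ x - f₂ x|) μ :=
    (hw.add hd).integrable_mul hd
  rw [← integral_sub hg₁.integrableOn hg₂.integrableOn, ← integral_const_mul]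
  calc |∫ x in s, (g α (f₁ x) - g α (f₂ x)) ∂μ|
      ≤ ∫ x in s, |g α (f₁ x) - g α (f₂ x)| ∂μ := abs_integral_le_integral_abs
    _ ≤ ∫ x, |g α (f₁ x) - g α (f₂ x)| ∂μ :=
        setIntegral_le_integral (hg₁.sub hg₂).abs (ae_of_all _ fun _ => abs_nonneg _)
    _ ≤ _ := by
        refine integral_mono_ae (hg₁.sub hg₂).abs (hbound.const_mul _) ?_
        filter_upwards [hf₁R, hf₂R, hf₂w] with x h₁ h₂ hw
        have hmax : max |f₁ x| |f₂ x| ≤ w x + |f₁ x - f₂ x| :=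
          max_le (by linarith [abs_sub_abs_le_abs_sub (f₁ x) (f₂ x)])
            (by linarith [abs_nonneg (f₁ x - f₂ x)])
        calc |g α (f₁ x) - g α (f₂ x)|
            ≤ α * Real.exp (α * R) * max |f₁ x| |f₂ x| * |f₁ x - f₂ x| :=
              abs_g_sub_g_le hα h₁ h₂
          _ ≤ _ := by rw [mul_assoc]; gcongr

lemma setIntegral_g_comp_le {α R : ℝ} (hα : 0 < α) {f w : X → ℝ} (s : Set X)
    (hf : MemLp f 2 μ) (hw : MemLp w 2 μ) (hfR : ∀ᵐ x ∂μ, |f x| ≤ R)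
    (hfw : ∀ᵐ x ∂μ, |f x| ≤ w x) :
    ∫ x in s, g α (f x) ∂μ ≤ α * Real.exp (α * R) * ∫ x in s, w x ^ 2 ∂μ := by
  rw [← integral_const_mul]
  refine integral_mono_ae (integrable_g_comp hα hf hfR).integrableOn
    (hw.integrable_sq.const_mul _).integrableOn ?_
  filter_upwards [ae_restrict_of_ae hfR, ae_restrict_of_ae hfw] with x hR hw
  calc g α (f x) ≤ α * Real.exp (α * R) * f x ^ 2 := g_le_mul_sq hα hR
    _ ≤ α * Real.exp (α * R) * w x ^ 2 := by rw [← sq_abs (f x)]; gcongr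

lemma tendsto_integral_add_abs_mul_abs {w : X → ℝ} {d : ℕ → X → ℝ} (hw : MemLp w 2 μ)
    (hw0 : 0 ≤ᵐ[μ] w) (hd : ∀ m, MemLp (d m) 2 μ)
    (hd0 : Tendsto (fun m => ∫ x, d m x ^ 2 ∂μ) atTop (𝓝 0)) :
    Tendsto (fun m => ∫ x, (w x + |d m x|) * |d m x| ∂μ) atTop (𝓝 0) := by
  have hdabs : ∀ m, MemLp (fun x => |d m x|) 2 μ := fun m => (hd m).abs
  have hcs : ∀ m, ∫ x, w x * |d m x| ∂μ ≤
      (∫ x, w x ^ 2 ∂μ) ^ (1 / 2 : ℝ) * (∫ x, d m x ^ 2 ∂μ) ^ (1 / 2 : ℝ) := fun m => by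
    simpa [Real.rpow_two] using
      integral_mul_le_Lp_mul_Lq_of_nonneg Real.HolderConjugate.two_two hw0
        (ae_of_all _ fun x => abs_nonneg (d m x)) (by simpa using hw) (by simpa using hdabs m)
  have hsplit : ∀ m, ∫ x, (w x + |d m x|) * |d m x| ∂μ =
      ∫ x, w x * |d m x| ∂μ + ∫ x, d m x ^ 2 ∂μ := fun m => by
    have hwd : Integrable (fun x => w x * |d m x|) μ := hw.integrable_mul (hdabs m)
    rw [← integral_add hwd (hd m).integrable_sq]
    congr 1 with x
    rw [add_mul, abs_mul_abs_self, sq]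
  have hlim : Tendsto (fun m => (∫ x, w x ^ 2 ∂μ) ^ (1 / 2 : ℝ) *
      (∫ x, d m x ^ 2 ∂μ) ^ (1 / 2 : ℝ) + ∫ x, d m x ^ 2 ∂μ) atTop (𝓝 0) := by
    simpa using ((hd0.rpow_const (p := 1 / 2) (Or.inr (by norm_num))).const_mul _).add hd0
  have hnonneg : ∀ m, 0 ≤ ∫ x, (w x + |d m x|) * |d m x| ∂μ := fun m =>
    integral_nonneg_of_ae (by
      filter_upwards [hw0] with x hx
      exact mul_nonneg (add_nonneg hx (abs_nonneg _)) (abs_nonneg _))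
  exact squeeze_zero hnonneg (fun m => (hsplit m).trans_le (by linarith [hcs m])) hlim

lemma ae_abs_le_of_tendsto_integral_sq {f : ℕ → X → ℝ} {f₀ : X → ℝ} {M : ℝ}
    (hf : ∀ m, MemLp (f m) 2 μ) (hf₀ : MemLp f₀ 2 μ) (hfM : ∀ m, ∀ᵐ x ∂μ, |f m x| ≤ M)
    (hlim : Tendsto (fun m => ∫ x, (f m x - f₀ x) ^ 2 ∂μ) atTop (𝓝 0)) :
    ∀ᵐ x ∂μ, |f₀ x| ≤ M := by
  have hnorm : ∀ m, eLpNorm (f m - f₀) 2 μ =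
      ENNReal.ofReal ((∫ x, (f m x - f₀ x) ^ 2 ∂μ) ^ (1 / 2 : ℝ)) := fun m => by
    simp [((hf m).sub hf₀).eLpNorm_eq_integral_rpow_norm two_ne_zero ENNReal.ofNat_ne_top]
  have hL2 : Tendsto (fun m => eLpNorm (f m - f₀) 2 μ) atTop (𝓝 0) := by
    simp_rw [hnorm]
    simpa using ENNReal.tendsto_ofReal (hlim.rpow_const (p := 1 / 2) (Or.inr (by norm_num)))
  obtain ⟨ns, -, hns⟩ := (tendstoInMeasure_of_tendsto_eLpNorm two_ne_zero
    (fun m => (hf m).1) hf₀.1 hL2).exists_seq_tendsto_ae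
  filter_upwards [hns, ae_all_iff.2 fun k => hfM (ns k)] with x hx hxM
  exact le_of_tendsto' hx.abs hxM

end Integrals

lemma tendsto_setIntegral_abs_lt_inv_nat {μ : Measure ℝ} (h0 : μ {0} = 0) {f : ℝ → ℝ}
    (hf : Integrable f μ) :
    Tendsto (fun m : ℕ => ∫ x in {x : ℝ | 1 / (m : ℝ) ≤ |x|}ᶜ, f x ∂μ) atTop (𝓝 0) := by
  rw [← tendsto_add_atTop_iff_nat 1]
  set s : ℕ → Set ℝ := fun m => {x : ℝ | 1 / ((m + 1 : ℕ) : ℝ) ≤ |x|}ᶜ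
  have hs : ∀ m, MeasurableSet (s m) := fun m =>
    (measurableSet_le measurable_const measurable_abs).compl
  have hanti : Antitone s := fun m k hmk x hx => by
    simp only [s, Set.mem_compl_iff, Set.mem_ofPred_eq, not_le] at hx ⊢
    exact hx.trans_le (one_div_le_one_div_of_le (by positivity) (by gcongr))
  have hinter : μ (⋂ m, s m) = 0 := measure_mono_null (fun x hx => by
    by_contra hx0
    obtain ⟨m, hm⟩ := exists_nat_one_div_lt (abs_pos.2 hx0)
    exact Set.mem_iInter.1 hx m (by simpa [s] using hm.le)) h0
  have h := tendsto_setIntegral_of_antitone hs hanti ⟨0, hf.integrableOn⟩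
  rwa [setIntegral_measure_zero _ hinter] at h

noncomputable def objective (α θ σ : ℝ) (β : ℝ → ℝ) (n : Measure ℝ) (z : ℝ) (u : ℝ → ℝ)
    (π : ℝ) : ℝ :=
  α / 2 * (π * σ - (z + θ / α)) ^ 2 + ∫ x, g α (u x - π * β x) ∂n

noncomputable def truncObjective (α θ σ : ℝ) (β : ℝ → ℝ) (n : Measure ℝ) (ρ : ℕ → ℝ → ℝ)
    (ρM : ℝ → ℝ) (m : ℕ) (z : ℝ) (u : ℝ → ℝ) (π : ℝ) : ℝ :=
  α / 2 * (π * σ - (z + θ / α)) ^ 2 * ρ m z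
    + ∫ x in {x : ℝ | 1 / (m : ℝ) ≤ |x|}, g α (u x - π * β x) * ρM (u x) ∂n

noncomputable def truncErrorBound (α θ σ : ℝ) (β : ℝ → ℝ) (n : Measure ℝ) (C M K : ℝ) (m : ℕ)
    (z' z : ℝ) (v u : ℝ → ℝ) : ℝ :=
  α / 2 * ((2 * (C * |σ|) + |z' + θ / α| + |z + θ / α|) * |z' - z|) +
    α * Real.exp (α * (M + C * K)) *
      ((∫ x, (|u x| + C * |β x| + |v x - u x|) * |v x - u x| ∂n) +
        ∫ x in {x : ℝ | 1 / (m : ℝ) ≤ |x|}ᶜ, (|u x| + C * |β x|) ^ 2 ∂n)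

section Objective

variable {α θ σ : ℝ} {β : ℝ → ℝ} {n : Measure ℝ}

lemma objective_nonneg (hα : 0 < α) (z : ℝ) (u : ℝ → ℝ) (π : ℝ) :
    0 ≤ objective α θ σ β n z u π :=
  add_nonneg (by positivity) (integral_nonneg fun _ => g_nonneg hα _)

lemma truncObjective_nonneg (hα : 0 < α) {ρ : ℕ → ℝ → ℝ} {ρM : ℝ → ℝ} {m : ℕ} {z : ℝ}
    (hρ : 0 ≤ ρ m z) (hρM : ∀ y, 0 ≤ ρM y) (u : ℝ → ℝ) (π : ℝ) :
    0 ≤ truncObjective α θ σ β n ρ ρM m z u π :=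
  add_nonneg (by positivity) (integral_nonneg fun _ => mul_nonneg (g_nonneg hα _) (hρM _))

lemma abs_truncObjective_sub_objective_le (hα : 0 < α) {ρ : ℕ → ℝ → ℝ} {ρM : ℝ → ℝ} {m : ℕ}
    {z' z π C M K : ℝ} {v u : ℝ → ℝ} (hπ : |π| ≤ C) (hρ : ρ m z' = 1)
    (hρM : ∀ y, |y| ≤ M → ρM y = 1) (hv : MemLp v 2 n) (hu : MemLp u 2 n) (hβ : MemLp β 2 n)
    (hvM : ∀ᵐ x ∂n, |v x| ≤ M) (huM : ∀ᵐ x ∂n, |u x| ≤ M) (hβK : ∀ᵐ x ∂n, |β x| ≤ K) :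
    |truncObjective α θ σ β n ρ ρM m z' v π - objective α θ σ β n z u π| ≤
      truncErrorBound α θ σ β n C M K m z' z v u := by
  set A := {x : ℝ | 1 / (m : ℝ) ≤ |x|}
  have hA : MeasurableSet A := measurableSet_le measurable_const measurable_abs
  have hC : 0 ≤ C := (abs_nonneg π).trans hπ
  have hw : MemLp (fun x => |u x| + C * |β x|) 2 n := hu.abs.add (hβ.abs.const_mul C)
  have hfv : MemLp (fun x => v x - π * β x) 2 n := hv.sub (hβ.const_mul π)
  have hfu : MemLp (fun x => u x - π * β x) 2 n := hu.sub (hβ.const_mul π)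
  have hR : ∀ f : ℝ → ℝ, (∀ᵐ x ∂n, |f x| ≤ M) → ∀ᵐ x ∂n, |f x - π * β x| ≤ M + C * K :=
    fun f hf => by
      filter_upwards [hf, hβK] with x h₁ h₂
      exact (abs_sub_mul_le hπ _ _).trans (by gcongr)
  have hfuw : ∀ᵐ x ∂n, |u x - π * β x| ≤ |u x| + C * |β x| :=
    ae_of_all _ fun x => abs_sub_mul_le hπ _ _
  have htrunc : truncObjective α θ σ β n ρ ρM m z' v π =
      α / 2 * (π * σ - (z' + θ / α)) ^ 2 + ∫ x in A, g α (v x - π * β x) ∂n := by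
    rw [truncObjective, hρ, mul_one]
    congr 1
    refine integral_congr_ae ?_
    filter_upwards [ae_restrict_of_ae hvM] with x hx
    rw [hρM _ hx, mul_one]
  have hsplit : objective α θ σ β n z u π = α / 2 * (π * σ - (z + θ / α)) ^ 2 +
      ((∫ x in A, g α (u x - π * β x) ∂n) + ∫ x in Aᶜ, g α (u x - π * β x) ∂n) := by
    rw [objective, integral_add_compl hA (integrable_g_comp hα hfu (hR u huM))]
  have hquad : |α / 2 * (π * σ - (z' + θ / α)) ^ 2 - α / 2 * (π * σ - (z + θ / α)) ^ 2| ≤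
      α / 2 * ((2 * (C * |σ|) + |z' + θ / α| + |z + θ / α|) * |z' - z|) := by
    rw [← mul_sub, abs_mul, abs_of_pos (half_pos hα)]
    have hπσ : |π * σ| ≤ C * |σ| := by rw [abs_mul]; gcongr
    gcongr
    refine (abs_sub_sq_sub_sub_sq_le _ _ _).trans ?_
    rw [add_sub_add_right_eq_sub]
    gcongr
  have hint := abs_setIntegral_g_comp_sub_le hα A hfv hfu hw (hR v hvM) (hR u huM) hfuw
  simp only [sub_sub_sub_cancel_right] at hint
  have htail := setIntegral_g_comp_le hα Aᶜ hfu hw (hR u huM) hfuw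
  have htail₀ : 0 ≤ ∫ x in Aᶜ, g α (u x - π * β x) ∂n := integral_nonneg fun _ => g_nonneg hα _
  rw [htrunc, hsplit, truncErrorBound]
  have := abs_le.1 hquad
  have := abs_le.1 hint
  exact abs_le.2 ⟨by linarith, by linarith⟩

lemma tendsto_truncErrorBound (hn0 : n {0} = 0) {C M K z : ℝ} {zs : ℕ → ℝ}
    {us : ℕ → ℝ → ℝ} {u : ℝ → ℝ} (hC : 0 ≤ C) (hβ : MemLp β 2 n) (hz : Tendsto zs atTop (𝓝 z))
    (hus : ∀ m, MemLp (us m) 2 n) (hu : MemLp u 2 n)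
    (husu : Tendsto (fun m => ∫ x, (us m x - u x) ^ 2 ∂n) atTop (𝓝 0)) :
    Tendsto (fun m => truncErrorBound α θ σ β n C M K m (zs m) z (us m) u) atTop (𝓝 0) := by
  have hw : MemLp (fun x => |u x| + C * |β x|) 2 n := hu.abs.add (hβ.abs.const_mul C)
  have hQ := (((hz.add_const (θ / α)).abs.const_add (2 * (C * |σ|))).add_const
    |z + θ / α|).mul (hz.sub_const z).abs
  have hI := tendsto_integral_add_abs_mul_abs hw (ae_of_all _ fun x => by positivity)
    (fun m => (hus m).sub hu) husu
  have hT := tendsto_setIntegral_abs_lt_inv_nat hn0 hw.integrable_sq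
  simpa [truncErrorBound] using
    (hQ.const_mul (α / 2)).add ((hI.add hT).const_mul (α * Real.exp (α * (M + C * K))))

end Objective

theorem stmt15_general (α θ σ M : ℝ) (hα : 0 < α)
    (n : Measure ℝ) (hn0 : n {0} = 0)
    (β : ℝ → ℝ) (hβ : MemL2Linf n β)
    (𝒞 : Set ℝ) (h𝒞c : IsCompact 𝒞) (h𝒞ne : 𝒞.Nonempty)
    (ρ : ℕ → ℝ → ℝ)
    (hρ01 : ∀ m : ℕ, 1 ≤ m → ∀ z : ℝ, ρ m z ∈ Set.Icc (0:ℝ) 1)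
    (hρone : ∀ m : ℕ, 1 ≤ m → ∀ z : ℝ, |z| ≤ (m : ℝ) → ρ m z = 1)
    (ρM : ℝ → ℝ)
    (hρM01 : ∀ y : ℝ, ρM y ∈ Set.Icc (0:ℝ) 1)
    (hρMone : ∀ y : ℝ, |y| ≤ M → ρM y = 1)
    (zs : ℕ → ℝ) (z : ℝ) (hz : Filter.Tendsto zs Filter.atTop (nhds z))
    (us : ℕ → ℝ → ℝ) (u : ℝ → ℝ)
    (husm : ∀ m : ℕ, Measurable (us m))
    (hus2 : ∀ m : ℕ, Integrable (fun x => (us m x) ^ 2) n)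
    (husb : ∀ m : ℕ, ∀ᵐ x ∂n, |us m x| ≤ M)
    (hum : Measurable u) (hu2 : Integrable (fun x => (u x) ^ 2) n)
    (husu : Filter.Tendsto (fun m : ℕ => ∫ x, (us m x - u x) ^ 2 ∂n)
      Filter.atTop (nhds 0)) :
    Filter.Tendsto (fun m : ℕ => genT α θ σ β 𝒞 n ρ ρM m (zs m) (us m))
      Filter.atTop (nhds (gen α θ σ β 𝒞 n z u)) := by
  obtain ⟨hβm, hβ2, K, hβK⟩ := hβ
  obtain ⟨C, hC⟩ : ∃ C, ∀ π ∈ 𝒞, |π| ≤ C := h𝒞c.isBounded.exists_norm_le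
  have hL2 : ∀ {f : ℝ → ℝ}, Measurable f → Integrable (fun x => f x ^ 2) n → MemLp f 2 n :=
    fun hf hf2 => (memLp_two_iff_integrable_sq hf.aestronglyMeasurable).2 hf2
  have husL2 := fun m => hL2 (husm m) (hus2 m)
  have huL2 := hL2 hum hu2
  have hβL2 := hL2 hβm hβ2
  have huM := ae_abs_le_of_tendsto_integral_sq husL2 huL2 husb husu
  have hm : ∀ᶠ m : ℕ in atTop, 1 ≤ m ∧ |zs m| ≤ m :=
    (eventually_ge_atTop 1).and (eventually_abs_le_natCast hz)
  have hsInf : Tendsto (fun m => sInf (truncObjective α θ σ β n ρ ρM m (zs m) (us m) '' 𝒞))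
      atTop (𝓝 (sInf (objective α θ σ β n z u '' 𝒞))) :=
    tendsto_csInf_image_of_abs_sub_le h𝒞ne
      (hm.mono fun m hm => ⟨0, Set.forall_mem_image.2 fun π _ =>
        truncObjective_nonneg hα (hρ01 m hm.1 _).1 (fun y => (hρM01 y).1) _ π⟩)
      ⟨0, Set.forall_mem_image.2 fun π _ => objective_nonneg hα z u π⟩
      (tendsto_truncErrorBound hn0 ((abs_nonneg _).trans (hC _ h𝒞ne.some_mem)) hβL2 hz husL2
        huL2 husu)
      (hm.mono fun m hm π hπ => abs_truncObjective_sub_objective_le hα (hC π hπ)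
        (hρone m hm.1 _ hm.2) hρMone (husL2 m) huL2 hβL2 (husb m) huM hβK)
  exact (hsInf.sub (hz.const_mul θ)).sub_const _

theorem stmt15 (α θ σ M : ℝ) (hα : 0 < α) (hM : 0 < M)
    (n : Measure ℝ) [SigmaFinite n] (hn0 : n {0} = 0)
    (β : ℝ → ℝ) (hβ : MemL2Linf n β)
    (𝒞 : Set ℝ) (h𝒞c : IsCompact 𝒞) (h𝒞ne : 𝒞.Nonempty) (h𝒞0 : (0:ℝ) ∈ 𝒞)
    (ρ : ℕ → ℝ → ℝ)
    (hρc : ∀ m : ℕ, 1 ≤ m → Continuous (ρ m))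
    (hρ01 : ∀ m : ℕ, 1 ≤ m → ∀ z : ℝ, ρ m z ∈ Set.Icc (0:ℝ) 1)
    (hρone : ∀ m : ℕ, 1 ≤ m → ∀ z : ℝ, |z| ≤ (m : ℝ) → ρ m z = 1)
    (hρzero : ∀ m : ℕ, 1 ≤ m → ∀ z : ℝ, (m : ℝ) + 1 ≤ |z| → ρ m z = 0)
    (hρmono : ∀ m : ℕ, 1 ≤ m → ∀ z : ℝ, ρ m z ≤ ρ (m + 1) z)
    (ρM : ℝ → ℝ) (hρMc : Continuous ρM)
    (hρM01 : ∀ y : ℝ, ρM y ∈ Set.Icc (0:ℝ) 1)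
    (hρMone : ∀ y : ℝ, |y| ≤ M → ρM y = 1)
    (zs : ℕ → ℝ) (z : ℝ) (hz : Filter.Tendsto zs Filter.atTop (nhds z))
    (us : ℕ → ℝ → ℝ) (u : ℝ → ℝ)
    (husm : ∀ m : ℕ, Measurable (us m))
    (hus2 : ∀ m : ℕ, Integrable (fun x => (us m x) ^ 2) n)
    (husb : ∀ m : ℕ, ∀ᵐ x ∂n, |us m x| ≤ M)
    (hum : Measurable u) (hu2 : Integrable (fun x => (u x) ^ 2) n)
    (husu : Filter.Tendsto (fun m : ℕ => ∫ x, (us m x - u x) ^ 2 ∂n)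
      Filter.atTop (nhds 0)) :
    Filter.Tendsto (fun m : ℕ => genT α θ σ β 𝒞 n ρ ρM m (zs m) (us m))
      Filter.atTop (nhds (gen α θ σ β 𝒞 n z u)) :=
  stmt15_general α θ σ M hα n hn0 β hβ 𝒞 h𝒞c h𝒞ne ρ hρ01 hρone ρM hρM01 hρMone zs z hz us u husm
    hus2 husb hum hu2 husu
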